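/- arXiv:1610.10002 — 6 statements merged into one kernel-verified Lean document; each statement's English description precedes it below -/
import Mathlib

section
/- Let G and H be graphs with χ_v(G) = χ_v(H), and suppose every optimal vector coloring of G is injective (assigns distinct vectors to distinct vertices). Then every graph homomorphism from G to H is injective. -/
open SimpleGraph

/-- A vector `t`-coloring of `G`: an assignment of unit vectors to the vertices such
that adjacent vertices receive vectors with inner product at most `-1/(t-1)`. -/
def IsVectorColoring {V : Type*} (G : SimpleGraph V) {d : ℕ} (t : ℝ)
    (p : V → EuclideanSpace ℝ (Fin d)) : Prop :=
  (∀ v, ‖p v‖ = 1) ∧ ∀ u v : V, G.Adj u v → (inner ℝ (p u) (p v) : ℝ) ≤ -1 / (t - 1)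

/-- The vector chromatic number of `G`. -/
noncomputable def vecChrom {V : Type*} (G : SimpleGraph V) : ℝ :=
  sInf {t : ℝ | 2 ≤ t ∧ ∃ (d : ℕ) (p : V → EuclideanSpace ℝ (Fin d)), IsVectorColoring G t p}

/-! Composing an optimal vector coloring of `H` with `φ` gives an optimal vector coloring of `G`,
which is injective by hypothesis, hence so is `φ`. The real content is that `χ_v(H)` is attained:
every vector coloring of `H` moves isometrically into dimension `|V(H)|`, where the `t`-colorings
for `t > χ_v(H)` form a directed family of nonempty compact sets, and a point of their
intersection is a `χ_v(H)`-coloring by continuity in `t`. -/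

open Module Filter Topology

theorem exists_linearIsometry_euclideanSpace_of_finrank_le {E : Type*} [NormedAddCommGroup E]
    [InnerProductSpace ℝ E] [FiniteDimensional ℝ E] {N : ℕ} (h : finrank ℝ E ≤ N) :
    Nonempty (E →ₗᵢ[ℝ] EuclideanSpace ℝ (Fin N)) := by
  let b := stdOrthonormalBasis ℝ E
  let e : Fin (finrank ℝ E) → EuclideanSpace ℝ (Fin N) :=
    fun i => EuclideanSpace.single (Fin.castLE h i) 1
  have he : Orthonormal ℝ e := EuclideanSpace.orthonormal_single.comp _ (Fin.castLE_injective h)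
  have hbe : ⇑(b.toBasis.constr ℝ e) ∘ ⇑b.toBasis = e :=
    funext (b.toBasis.constr_basis ℝ e)
  exact ⟨LinearMap.isometryOfOrthonormal _ (v := b.toBasis) b.orthonormal (hbe ▸ he)⟩

namespace IsVectorColoring

variable {V W : Type*} {G : SimpleGraph V} {H : SimpleGraph W} {d : ℕ} {t : ℝ}
  {p : V → EuclideanSpace ℝ (Fin d)}

theorem comp {q : W → EuclideanSpace ℝ (Fin d)} (hq : IsVectorColoring H t q) (φ : G →g H) :
    IsVectorColoring G t (q ∘ φ) :=
  ⟨fun v => hq.1 (φ v), fun _ _ huv => hq.2 _ _ (φ.map_adj huv)⟩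

theorem mono {t' : ℝ} (hp : IsVectorColoring G t' p) (ht' : 1 < t') (htt' : t' ≤ t) :
    IsVectorColoring G t p := by
  refine ⟨hp.1, fun u v huv => (hp.2 u v huv).trans ?_⟩
  rw [neg_div, neg_div, neg_le_neg_iff]
  exact one_div_le_one_div_of_le (by linarith) (by linarith)

theorem exists_fin_card [Fintype V] (hp : IsVectorColoring G t p) :
    ∃ q : V → EuclideanSpace ℝ (Fin (Fintype.card V)), IsVectorColoring G t q := by
  let S := Submodule.span ℝ (Set.range p)
  have hS : finrank ℝ S ≤ Fintype.card V := finrank_range_le_card p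
  obtain ⟨L⟩ := exists_linearIsometry_euclideanSpace_of_finrank_le hS
  let q v := L ⟨p v, Submodule.subset_span ⟨v, rfl⟩⟩
  refine ⟨q, fun v => ?_, fun u v huv => ?_⟩
  · simpa [q] using hp.1 v
  · simpa [q] using hp.2 u v huv

theorem of_forall_lt {m : ℝ} (hm : 1 < m) (hp : ∀ t > m, IsVectorColoring G t p) :
    IsVectorColoring G m p := by
  refine ⟨(hp (m + 1) (lt_add_one m)).1, fun u v huv => ?_⟩
  have hlim : Tendsto (fun t : ℝ => -1 / (t - 1)) (𝓝[>] m) (𝓝 (-1 / (m - 1))) :=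
    ((continuousAt_const.div (continuousAt_id.sub continuousAt_const)
      (sub_ne_zero.mpr hm.ne')).tendsto).mono_left nhdsWithin_le_nhds
  exact ge_of_tendsto hlim (eventually_nhdsWithin_of_forall fun t ht => (hp t ht).2 u v huv)

end IsVectorColoring

theorem isClosed_setOf_isVectorColoring {V : Type*} (G : SimpleGraph V) (d : ℕ) (t : ℝ) :
    IsClosed {p : V → EuclideanSpace ℝ (Fin d) | IsVectorColoring G t p} := by
  simp only [IsVectorColoring, Set.ofPred_and, Set.ofPred_forall]
  refine .inter (isClosed_iInter fun v => ?_)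
    (isClosed_iInter fun u => isClosed_iInter fun v => isClosed_iInter fun _ => ?_)
  · exact isClosed_eq (continuous_apply v).norm continuous_const
  · exact isClosed_le ((continuous_apply u).inner (continuous_apply v)) continuous_const

theorem isCompact_setOf_isVectorColoring {V : Type*} (G : SimpleGraph V) (d : ℕ) (t : ℝ) :
    IsCompact {p : V → EuclideanSpace ℝ (Fin d) | IsVectorColoring G t p} :=
  (isCompact_univ_pi fun _ => isCompact_sphere 0 1).of_isClosed_subset
    (isClosed_setOf_isVectorColoring G d t) fun _ hp v _ => mem_sphere_zero_iff_norm.mpr (hp.1 v)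

theorem exists_isVectorColoring_vecChrom {V : Type*} [Fintype V] (G : SimpleGraph V) :
    ∃ (d : ℕ) (p : V → EuclideanSpace ℝ (Fin d)), IsVectorColoring G (vecChrom G) p := by
  let S := {t : ℝ | 2 ≤ t ∧ ∃ (d : ℕ) (p : V → EuclideanSpace ℝ (Fin d)),
    IsVectorColoring G t p}
  obtain hempty | hne := S.eq_empty_or_nonempty
  · -- `vecChrom G = sInf ∅ = 0`, and `-1 / (0 - 1) = 1` bounds the inner product of unit vectors
    have h0 : vecChrom G = 0 := (congrArg sInf hempty).trans Real.sInf_empty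
    refine ⟨1, fun _ => EuclideanSpace.single 0 1, fun _ => by simp, fun _ _ _ => ?_⟩
    simp [h0]
  set m := vecChrom G
  have hm : 2 ≤ m := le_csInf hne fun t ht => ht.1
  let C (t : Set.Ioi m) : Set (V → EuclideanSpace ℝ (Fin (Fintype.card V))) :=
    {p | IsVectorColoring G t p}
  have hC : ∀ t, (C t).Nonempty := by
    rintro ⟨t, ht⟩
    obtain ⟨t', ⟨ht', d, p, hp⟩, ht't⟩ := exists_lt_of_csInf_lt hne ht
    obtain ⟨q, hq⟩ := hp.exists_fin_card
    exact ⟨q, hq.mono (by linarith) ht't.le⟩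
  have hdir : Directed (· ⊇ ·) C :=
    Monotone.directed_ge fun t _ htt' _ hp => hp.mono (by linarith [t.2.out]) htt'
  have : Nonempty (Set.Ioi m) := ⟨⟨m + 1, lt_add_one m⟩⟩
  obtain ⟨p, hp⟩ := IsCompact.nonempty_iInter_of_directed_nonempty_isCompact_isClosed C hdir hC
    (fun _ => isCompact_setOf_isVectorColoring G _ _)
    (fun _ => isClosed_setOf_isVectorColoring G _ _)
  exact ⟨_, p, .of_forall_lt (by linarith) fun t ht => Set.mem_iInter.mp hp ⟨t, ht⟩⟩

theorem stmt1_general {VG VH : Type*} [Fintype VH]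
    (G : SimpleGraph VG) (H : SimpleGraph VH)
    (hchi : vecChrom G = vecChrom H)
    (hinj : ∀ (d : ℕ) (p : VG → EuclideanSpace ℝ (Fin d)),
      IsVectorColoring G (vecChrom G) p → Function.Injective p)
    (φ : G →g H) :
    Function.Injective φ := by
  obtain ⟨d, p, hp⟩ := exists_isVectorColoring_vecChrom H
  exact (hinj d _ (hchi ▸ hp.comp φ)).of_comp

/-- If `χ_v(G) = χ_v(H)` and every optimal vector coloring of `G` is injective,
then every graph homomorphism `G → H` is injective. -/
theorem stmt1 {VG VH : Type*} [Fintype VG] [Fintype VH]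
    (G : SimpleGraph VG) (H : SimpleGraph VH)
    (hchi : vecChrom G = vecChrom H)
    (hinj : ∀ (d : ℕ) (p : VG → EuclideanSpace ℝ (Fin d)),
      IsVectorColoring G (vecChrom G) p → Function.Injective p)
    (φ : G →g H) :
    Function.Injective φ :=
  stmt1_general G H hchi hinj φ
end

section
/- Every locally injective endomorphism of a connected finite graph is an automorphism. -/
/-!
In the finite monoid of endomorphisms of `G`, some power `φ ^ k` with `k ≥ 1` is idempotent, i.e.
a retraction of `G` onto its image, and it is locally injective as a composite of locally injective
homomorphisms. A locally injective retraction fixes every neighbour `v` of a fixed vertex `u`: both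
`v` and its image are neighbours of `u`, and they have the same image. By connectedness `φ ^ k = 1`,
so `φ` is invertible with inverse `φ ^ (k - 1)`, again a homomorphism.
-/

open SimpleGraph

-- Ellis–Numakura lemma for the powers of `a`, made compact by the discrete topology.
theorem exists_pow_succ_isIdempotentElem {M : Type*} [Monoid M] [Finite M] (a : M) :
    ∃ n : ℕ, IsIdempotentElem (a ^ (n + 1)) := by
  let _ : TopologicalSpace M := ⊥
  have : DiscreteTopology M := ⟨rfl⟩
  obtain ⟨_, ⟨n, rfl⟩, h⟩ := exists_idempotent_in_compact_subsemigroup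
    (fun _ => continuous_of_discreteTopology) (Set.range fun n : ℕ => a ^ (n + 1))
    (Set.range_nonempty _) (Set.toFinite _).isCompact
    (by rintro _ ⟨i, rfl⟩ _ ⟨j, rfl⟩; exact ⟨i + j + 1, by rw [← pow_add]; ring_nf⟩)
  exact ⟨n, h⟩

namespace SimpleGraph

variable {V W X : Type*} {G : SimpleGraph V} {H : SimpleGraph W} {K : SimpleGraph X}

theorem Reachable.mem_of_adj_mem {s : Set V} (hs : ∀ ⦃u v⦄, u ∈ s → G.Adj u v → v ∈ s)
    {u v : V} (huv : G.Reachable u v) (hu : u ∈ s) : v ∈ s := by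
  obtain ⟨p⟩ := huv
  induction p with
  | nil => exact hu
  | cons h _ ih => exact ih (hs hu h)

namespace Hom

def IsLocallyInjective (f : G →g H) : Prop :=
  ∀ v, Set.InjOn f (G.neighborSet v)

theorem IsLocallyInjective.comp {f : G →g H} {g : H →g K} (hg : g.IsLocallyInjective)
    (hf : f.IsLocallyInjective) : (g.comp f).IsLocallyInjective :=
  fun v _ hu _ hw h => hf v hu hw (hg (f v) (f.map_adj hu) (f.map_adj hw) h)

theorem IsLocallyInjective.pow {f : G →g G} (hf : f.IsLocallyInjective) :
    ∀ n : ℕ, (f ^ n).IsLocallyInjective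
  | 0 => fun _ => Set.injOn_id _
  | n + 1 => by rw [pow_succ]; exact (hf.pow n).comp hf

theorem IsLocallyInjective.eq_one_of_isIdempotentElem (hG : G.Connected) {f : G →g G}
    (hf : f.IsLocallyInjective) (he : IsIdempotentElem f) : f = 1 := by
  have hff : ∀ v, f (f v) = f v := DFunLike.congr_fun he
  have fixed_of_adj : ∀ ⦃u v⦄, u ∈ {x | f x = x} → G.Adj u v → v ∈ {x | f x = x} := by
    intro u v (hu : f u = u) huv
    have hfv : G.Adj u (f v) := hu ▸ f.map_adj huv
    exact hf u hfv huv (hff v)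
  obtain ⟨a⟩ := hG.nonempty
  exact DFunLike.ext _ _ fun v => (hG.preconnected (f a) v).mem_of_adj_mem fixed_of_adj (hff a)

theorem exists_iso_coe_eq_of_pow_succ_eq_one {f : G →g G} {n : ℕ} (h : f ^ (n + 1) = 1) :
    ∃ ψ : G ≃g G, ⇑ψ = f := by
  have hleft : ∀ v, (f ^ n) (f v) = v := DFunLike.congr_fun ((pow_succ f n).symm.trans h)
  have hright : ∀ v, f ((f ^ n) v) = v := DFunLike.congr_fun ((pow_succ' f n).symm.trans h)
  refine ⟨⟨⟨f, ⇑(f ^ n), hleft, hright⟩, fun {u v} => ⟨fun hadj => ?_, f.map_adj⟩⟩, rfl⟩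
  simpa only [Equiv.coe_fn_mk, hleft] using (f ^ n).map_adj hadj

end Hom

end SimpleGraph

/-- Every locally injective endomorphism of a connected finite graph is an automorphism. -/
theorem stmt3 {V : Type*} [Fintype V] (G : SimpleGraph V) (hc : G.Connected)
    (φ : G →g G)
    (hli : ∀ u v w : V, u ≠ v → G.Adj u w → G.Adj v w → φ u ≠ φ v) :
    ∃ ψ : G ≃g G, ∀ v, ψ v = φ v := by
  have hφ : φ.IsLocallyInjective := fun w u hu v hv huv =>
    Classical.byContradiction fun hne => hli u v w hne hu.symm hv.symm huv
  obtain ⟨n, hn⟩ := exists_pow_succ_isIdempotentElem φ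
  obtain ⟨ψ, hψ⟩ := Hom.exists_iso_coe_eq_of_pow_succ_eq_one
    ((hφ.pow (n + 1)).eq_one_of_isIdempotentElem hc hn)
  exact ⟨ψ, congrFun hψ⟩
end

section
/- A connected finite graph G is a core if and only if there exists a (possibly infinite) graph H such that G → H and every homomorphism from G to H is locally injective. -/
open SimpleGraph

/-- `G` is a core: every endomorphism of `G` is an automorphism. -/
def IsCore {V : Type*} (G : SimpleGraph V) : Prop :=
  ∀ φ : G →g G, ∃ ψ : G ≃g G, ∀ v, ψ v = φ v

/-- A homomorphism is locally injective if it does not identify two distinct vertices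
having a common neighbor. -/
def LocallyInjective {VG VH : Type*} {G : SimpleGraph VG} {H : SimpleGraph VH}
    (φ : G →g H) : Prop :=
  ∀ u v w : VG, u ≠ v → G.Adj u w → G.Adj v w → φ u ≠ φ v

section Aux

variable {V : Type} {G : SimpleGraph V}

/-- iterate of an endomorphism as a homomorphism -/
def homIter (φ : G →g G) : ℕ → (G →g G)
  | 0 => Hom.id
  | n + 1 => (homIter φ n).comp φ

lemma homIter_apply (φ : G →g G) (n : ℕ) (v : V) :
    homIter φ n v = (φ : V → V)^[n] v := by
  induction n generalizing v with
  | zero => rfl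
  | succ n ih =>
    show homIter φ n (φ v) = _
    rw [ih, Function.iterate_succ_apply]

lemma locInj_comp {φ₁ φ₂ : G →g G} (h1 : LocallyInjective φ₁)
    (h2 : LocallyInjective φ₂) : LocallyInjective (φ₂.comp φ₁) := by
  intro u v w huv hu hv
  exact h2 _ _ (φ₁ w) (h1 u v w huv hu hv) (φ₁.map_adj hu) (φ₁.map_adj hv)

lemma locInj_homIter {φ : G →g G} (h : LocallyInjective φ) (n : ℕ) :
    LocallyInjective (homIter φ n) := by
  induction n with
  | zero => intro u v w huv _ _ ; exact huv
  | succ n ih => exact locInj_comp h ih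

/-- existence of an idempotent iterate of a self-map of a finite type -/
lemma exists_idem_iterate [Fintype V] (f : V → V) :
    ∃ k, 0 < k ∧ ∀ v, f^[k] (f^[k] v) = f^[k] v := by
  have : ¬ Function.Injective (fun n : ℕ => f^[n]) := by
    intro hinj
    exact (Set.infinite_range_of_injective hinj) (Set.toFinite _)
  obtain ⟨i, j, hij, hne⟩ : ∃ i j, f^[i] = f^[j] ∧ i < j := by
    simp only [Function.Injective, not_forall] at this
    obtain ⟨i, j, h, hne⟩ := this
    rcases lt_or_gt_of_ne hne with h' | h'
    · exact ⟨i, j, h, h'⟩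
    · exact ⟨j, i, h.symm, h'⟩
  set d := j - i with hd
  have hdpos : 0 < d := Nat.sub_pos_of_lt hne
  have hstep : ∀ m, i ≤ m → f^[m + d] = f^[m] := by
    intro m hm
    have h3 : m - i + (i + d) = m + d := by omega
    have h4 : m - i + i = m := by omega
    have hij' : i + (j - i) = j := by omega
    calc f^[m + d] = f^[m - i + (i + d)] := by rw [h3]
      _ = f^[m - i] ∘ f^[i + d] := by rw [Function.iterate_add f]
      _ = f^[m - i] ∘ f^[i] := by rw [hd, hij', ← hij]
      _ = f^[m - i + i] := by rw [Function.iterate_add f]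
      _ = f^[m] := by rw [h4]
  have hmul : ∀ t m, i ≤ m → f^[m + t * d] = f^[m] := by
    intro t
    induction t with
    | zero => intro m hm; simp
    | succ t ih =>
      intro m hm
      have : m + (t + 1) * d = (m + d) + t * d := by ring
      rw [this, ih (m + d) (by omega), hstep m hm]
  refine ⟨(i + 1) * d, by positivity, fun v => ?_⟩
  have : f^[(i + 1) * d + (i + 1) * d] = f^[(i + 1) * d] := by
    have hle : i ≤ (i + 1) * d := by nlinarith
    exact hmul (i + 1) ((i + 1) * d) hle
  calc f^[(i+1)*d] (f^[(i+1)*d] v) = f^[(i+1)*d + (i+1)*d] v := by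
        rw [Function.iterate_add_apply]
      _ = f^[(i+1)*d] v := by rw [this]

/-- a locally injective endomorphism of a connected finite graph is an automorphism -/
lemma locInj_to_auto [Fintype V] (hc : G.Connected) (φ : G →g G)
    (h : LocallyInjective φ) : ∃ ψ : G ≃g G, ∀ v, ψ v = φ v := by
  obtain ⟨k, hk, hidem⟩ := exists_idem_iterate (φ : V → V)
  set f : V → V := (φ : V → V) with hf
  -- the idempotent iterate is the identity
  have hfix : ∀ v, f^[k] v = v := by
    have hli : LocallyInjective (homIter φ k) := locInj_homIter h k
    -- if x is fixed and adjacent to y then y is fixed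
    have hadj : ∀ x y, f^[k] x = x → G.Adj x y → f^[k] y = y := by
      intro x y hx hxy
      by_contra hne
      have h1 : G.Adj (f^[k] y) (f^[k] x) := by
        have := (homIter φ k).map_adj hxy.symm
        rwa [homIter_apply, homIter_apply] at this
      rw [hx] at h1
      exact hli y (f^[k] y) x (fun he => hne he.symm) hxy.symm h1
        (by rw [homIter_apply, homIter_apply]; exact (hidem y).symm)
    have hwalk : ∀ (u v : V) (_ : G.Walk u v), f^[k] u = u → f^[k] v = v := by
      intro u v p
      induction p with
      | nil => exact id
      | cons ha _ ih => intro hu; exact ih (hadj _ _ hu ha)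
    obtain ⟨v₀⟩ := hc.nonempty
    intro v
    obtain ⟨p⟩ := hc.preconnected (f^[k] v₀) v
    exact hwalk _ _ p (hidem v₀)
  obtain ⟨k', rfl⟩ : ∃ k', k = k' + 1 := ⟨k - 1, by omega⟩
  have hleft : ∀ v, f^[k'] (f v) = v := by
    intro v
    rw [← Function.iterate_succ_apply]
    exact hfix v
  have hright : ∀ v, f (f^[k'] v) = v := by
    intro v
    have h5 := Function.iterate_succ_apply' f k' v
    rw [← h5]
    exact hfix v
  refine ⟨⟨⟨f, f^[k'], hleft, hright⟩, ?_⟩, fun v => rfl⟩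
  intro a b
  show G.Adj (f a) (f b) ↔ G.Adj a b
  constructor
  · intro hab
    have := (homIter φ k').map_adj hab
    rw [homIter_apply, homIter_apply] at this
    rwa [hleft a, hleft b] at this
  · exact fun hab => φ.map_adj hab

end Aux

/-- A connected finite graph `G` is a core iff there exists a (possibly infinite) graph `H`
with `G → H` such that every homomorphism from `G` to `H` is locally injective. -/
theorem stmt4 {V : Type} [Fintype V] (G : SimpleGraph V) (hc : G.Connected) :
    IsCore G ↔ ∃ (W : Type) (H : SimpleGraph W), Nonempty (G →g H) ∧
      ∀ φ : G →g H, LocallyInjective φ := by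
  constructor
  · intro hcore
    refine ⟨V, G, ⟨Hom.id⟩, fun φ => ?_⟩
    obtain ⟨ψ, hψ⟩ := hcore φ
    intro u v w huv _ _ hφ
    apply huv
    have : ψ u = ψ v := by rw [hψ, hψ, hφ]
    exact ψ.injective this
  · rintro ⟨W, H, ⟨ι⟩, hli⟩
    intro φ
    have hφ : LocallyInjective φ := by
      intro u v w huv hu hv hφeq
      exact hli (ι.comp φ) u v w huv hu hv (by simp [hφeq])
    exact locInj_to_auto hc φ hφ
end

section
/- For even k with n/2+1 ≤ k ≤ n-1, letting p_x ∈ ℝⁿ be defined by p_x(i) = (-1)^{x_i}/√n for even-weight x ∈ ℤ₂ⁿ, and V_x = span{p_y : y = x or d(x,y) = k}: for every even-weight x one has V_x = ℝⁿ. Consequently, if R is a symmetric n×n matrix with p_xᵀ R p_y = 0 for all pairs with x = y or d(x,y) = k, then R = 0. -/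
/-! If `y` is `x` with the coordinates in a `k`-set `S` flipped, then `(p_x - p_y) / 2 = p_x ⊙ 𝟙_S`,
so `V_x` contains the image of the span of the indicator vectors of `k`-sets under the invertible
diagonal map `v ↦ p_x ⊙ v`. For `0 < k < n` that span is everything: exchanging one element of a
`k`-set gives `eᵢ - eⱼ`, and `k eᵢ = 𝟙_S + ∑_{a ∈ S} (eᵢ - eₐ)` for `i ∈ S`.

Since `k` is even, every generator of `V_y` has even weight when `y` does, so `R p_y` is orthogonal
to `V_y = ℝⁿ` for each even `y`; hence `R` vanishes on `V_0 = ℝⁿ`. -/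

open Finset Submodule
open scoped Matrix

section

variable {K ι : Type*} [CommSemiring K] [Fintype ι] [DecidableEq ι] {s : Set (ι → K)}

theorem eq_zero_of_dotProduct_eq_zero_of_span_eq_top (hs : span K s = ⊤) {w : ι → K}
    (h : ∀ v ∈ s, v ⬝ᵥ w = 0) : w = 0 := by
  have hspan : ∀ v ∈ span K s, v ⬝ᵥ w = 0 := fun v hv => by
    induction hv using span_induction with
    | mem v hv => exact h v hv
    | zero => exact zero_dotProduct w
    | add u v _ _ hu hv => rw [add_dotProduct, hu, hv, add_zero]
    | smul c v _ hv => rw [smul_dotProduct, hv, smul_zero]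
  funext i
  simpa using hspan (Pi.single i 1) (hs ▸ mem_top)

theorem Matrix.eq_zero_of_mulVec_eq_zero_of_span_eq_top {m : Type*} (hs : span K s = ⊤)
    {A : Matrix m ι K} (h : ∀ v ∈ s, A *ᵥ v = 0) : A = 0 := by
  have : A.mulVecLin = 0 := LinearMap.ext_on hs h
  rw [← Matrix.toLin'_apply', ← map_zero Matrix.toLin'] at this
  exact Matrix.toLin'.injective this

end

section

variable {K ι : Type*} [Field K] [Fintype ι] [DecidableEq ι] {k : ℕ}

theorem single_sub_single_mem_span_sum_single (hk : 0 < k) (hkι : k < Fintype.card ι)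
    {i j : ι} (hij : i ≠ j) :
    Pi.single i 1 - Pi.single j 1 ∈
      span K ((fun S : Finset ι => ∑ a ∈ S, Pi.single a (1 : K)) '' {S | #S = k}) := by
  obtain ⟨S, hiS, hSj, hS⟩ := exists_subsuperset_card_eq
    (singleton_subset_iff.2 (mem_erase.2 ⟨hij, mem_univ i⟩)) (by simpa using Nat.one_le_of_lt hk)
    (by rw [card_erase_of_mem (mem_univ j), card_univ]; omega)
  have hi : i ∈ S := singleton_subset_iff.1 hiS
  have hj : j ∉ S.erase i := fun h => (mem_erase.1 (hSj (mem_of_mem_erase h))).1 rfl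
  have hS' : #(insert j (S.erase i)) = k := by
    rw [card_insert_of_notMem hj, card_erase_of_mem hi]; omega
  have key : (Pi.single i 1 - Pi.single j 1 : ι → K) =
      ∑ a ∈ S, Pi.single a 1 - ∑ a ∈ insert j (S.erase i), Pi.single a 1 := by
    rw [sum_insert hj, ← add_sum_erase S _ hi]; abel
  rw [key]
  exact sub_mem (subset_span ⟨S, hS, rfl⟩) (subset_span ⟨_, hS', rfl⟩)

theorem span_sum_single_eq_top [CharZero K] (hk : 0 < k) (hkι : k < Fintype.card ι) :
    span K ((fun S : Finset ι => ∑ a ∈ S, Pi.single a (1 : K)) '' {S | #S = k}) = ⊤ := by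
  set W := span K ((fun S : Finset ι => ∑ a ∈ S, Pi.single a (1 : K)) '' {S | #S = k})
  have hsingle : ∀ i, Pi.single i (1 : K) ∈ W := by
    intro i
    obtain ⟨S, hiS, -, hS⟩ := exists_subsuperset_card_eq (subset_univ {i})
      (by simpa using Nat.one_le_of_lt hk) (by rw [card_univ]; omega)
    have key : ((k : K) • Pi.single i 1 : ι → K) =
        ∑ a ∈ S, Pi.single a 1 + ∑ a ∈ S, (Pi.single i 1 - Pi.single a 1) := by
      rw [sum_sub_distrib, sum_const, hS, Nat.cast_smul_eq_nsmul]; abel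
    have hmem : (k : K) • Pi.single i (1 : K) ∈ W := by
      rw [key]
      refine add_mem (subset_span ⟨S, hS, rfl⟩) (sum_mem fun a _ => ?_)
      rcases eq_or_ne i a with rfl | hia
      · simp
      · exact single_sub_single_mem_span_sum_single hk hkι hia
    simpa [hk.ne'] using W.smul_mem (k : K)⁻¹ hmem
  rw [eq_top_iff, ← (Pi.basisFun K ι).span_eq, span_le]
  rintro _ ⟨i, rfl⟩
  simpa using hsingle i

end

theorem ZMod.neg_one_pow_val_add_one {R : Type*} [Ring R] (a : ZMod 2) :
    (-1 : R) ^ (a + 1).val = -(-1) ^ a.val := by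
  rw [ZMod.val_add, ZMod.val_one, ← neg_one_pow_eq_pow_mod_two, pow_succ, mul_neg_one]

theorem hammingDist_add_sum_single {ι β : Type*} [Fintype ι] [DecidableEq ι] [AddCommGroup β]
    [DecidableEq β] (x : ι → β) (S : Finset ι) {b : β} (hb : b ≠ 0) :
    hammingDist x (x + ∑ a ∈ S, Pi.single a b) = #S := by
  rw [hammingDist_eq_hammingNorm, neg_add_cancel_left, hammingNorm]
  congr 1
  ext i
  simp [Finset.sum_apply, Pi.single_apply, hb]

theorem ZMod.natCast_hammingNorm_two {ι : Type*} [Fintype ι] (x : ι → ZMod 2) :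
    (hammingNorm x : ZMod 2) = ∑ i, x i := by
  rw [hammingNorm, natCast_card_filter]
  exact sum_congr rfl fun i _ => by generalize x i = a; fin_cases a <;> rfl

theorem even_hammingNorm_iff_of_even_hammingDist {ι : Type*} [Fintype ι] {x y : ι → ZMod 2}
    (h : Even (hammingDist x y)) : Even (hammingNorm x) ↔ Even (hammingNorm y) := by
  rw [← ZMod.natCast_eq_zero_iff_even, hammingDist_eq_hammingNorm,
    ZMod.natCast_hammingNorm_two] at h
  simp only [Pi.add_apply, Pi.neg_apply, sum_add_distrib, sum_neg_distrib, neg_add_eq_zero] at h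
  simp only [← ZMod.natCast_eq_zero_iff_even, ZMod.natCast_hammingNorm_two, h]

section

variable {ι : Type*}

noncomputable def signVector (c : ℝ) (x : ι → ZMod 2) : ι → ℝ := fun i => (-1) ^ (x i).val / c

theorem signVector_ne_zero {c : ℝ} (hc : c ≠ 0) (x : ι → ZMod 2) (i : ι) :
    signVector c x i ≠ 0 :=
  div_ne_zero (pow_ne_zero _ (by norm_num)) hc

theorem signVector_add_sum_single [DecidableEq ι] (c : ℝ) (x : ι → ZMod 2) (S : Finset ι) :
    signVector c (x + ∑ a ∈ S, Pi.single a 1) =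
      signVector c x - (2 : ℝ) • (signVector c x * ∑ a ∈ S, Pi.single a 1) := by
  funext i
  by_cases hi : i ∈ S
  · simp only [signVector, Pi.add_apply, Pi.sub_apply, Pi.smul_apply, Pi.mul_apply, Finset.sum_apply,
      Pi.single_apply, sum_ite_eq, hi, ↓reduceIte, ZMod.neg_one_pow_val_add_one, mul_one,
      smul_eq_mul]
    ring
  · simp [signVector, Finset.sum_apply, Pi.single_apply, hi]

theorem span_signVector_eq_top [Fintype ι] [DecidableEq ι] {c : ℝ} (hc : c ≠ 0) {k : ℕ}
    (hk : 0 < k) (hkι : k < Fintype.card ι) (x : ι → ZMod 2) :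
    span ℝ {v | ∃ y, (y = x ∨ hammingDist x y = k) ∧ v = signVector c y} = ⊤ := by
  have hsurj : LinearMap.range (LinearMap.mulLeft ℝ (signVector c x)) = ⊤ :=
    LinearMap.range_eq_top.2 fun v => ⟨v / signVector c x, funext fun i =>
      mul_div_cancel₀ (v i) (signVector_ne_zero hc x i)⟩
  rw [eq_top_iff, ← hsurj, ← Submodule.map_top, ← span_sum_single_eq_top hk hkι, ← span_image,
    span_le]
  rintro _ ⟨_, ⟨S, hS, rfl⟩, rfl⟩
  have hflip : hammingDist x (x + ∑ a ∈ S, Pi.single a 1) = k :=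
    (hammingDist_add_sum_single x S one_ne_zero).trans hS
  have hmul : LinearMap.mulLeft ℝ (signVector c x) (∑ a ∈ S, Pi.single a 1) =
      (2 : ℝ)⁻¹ • (signVector c x - signVector c (x + ∑ a ∈ S, Pi.single a 1)) := by
    rw [signVector_add_sum_single, sub_sub_cancel, smul_smul, inv_mul_cancel₀ two_ne_zero,
      one_smul, LinearMap.mulLeft_apply]
  rw [hmul]
  exact smul_mem _ _
    (sub_mem (subset_span ⟨x, Or.inl rfl, rfl⟩) (subset_span ⟨_, Or.inr hflip, rfl⟩))

end

/-- For even `k` with `n/2 + 1 ≤ k ≤ n-1` and `p_x(i) = (-1)^{x_i}/√n`, the span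
`V_x = span{p_y : y = x or d(x,y) = k}` is all of `ℝⁿ` for every even-weight `x`;
consequently a symmetric matrix `R` with `p_xᵀ R p_y = 0` for all such pairs is zero. -/
theorem stmt13 (n k : ℕ) (hk : Even k) (h1 : (n : ℝ) / 2 + 1 ≤ k) (h2 : k + 1 ≤ n)
    (p : (Fin n → ZMod 2) → Fin n → ℝ)
    (hp : ∀ x i, p x i = (-1 : ℝ) ^ ((x i).val) / Real.sqrt n) :
    (∀ x : Fin n → ZMod 2, Even (hammingDist x 0) →
      Submodule.span ℝ
        {v : Fin n → ℝ | ∃ y : Fin n → ZMod 2,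
          (y = x ∨ hammingDist x y = k) ∧ v = p y} = ⊤) ∧
    ∀ R : Matrix (Fin n) (Fin n) ℝ, R.IsSymm →
      (∀ x y : Fin n → ZMod 2, Even (hammingDist x 0) → Even (hammingDist y 0) →
        (x = y ∨ hammingDist x y = k) →
        dotProduct (p x) (R.mulVec (p y)) = 0) →
      R = 0 := by
  obtain rfl : p = signVector √n := funext fun x => funext (hp x)
  have hk0 : 0 < k := by
    have : (0 : ℝ) < k := by linarith [show (0 : ℝ) ≤ n / 2 by positivity]
    exact_mod_cast this
  have hspan (x : Fin n → ZMod 2) := span_signVector_eq_top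
    (Real.sqrt_ne_zero'.2 (Nat.cast_pos.2 (by omega : 0 < n))) hk0 (by simpa using h2) x
  have heven {x y : Fin n → ZMod 2} (hx : Even (hammingDist x 0))
      (hxy : y = x ∨ hammingDist x y = k) : Even (hammingDist y 0) := by
    rcases hxy with rfl | hxy
    · exact hx
    · rw [hammingDist_zero_right] at hx ⊢
      exact (even_hammingNorm_iff_of_even_hammingDist (hxy ▸ hk)).1 hx
  refine ⟨fun x _ => hspan x, fun R _ hR => ?_⟩
  have hRy {y : Fin n → ZMod 2} (hy : Even (hammingDist y 0)) : R *ᵥ signVector √n y = 0 := by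
    refine eq_zero_of_dotProduct_eq_zero_of_span_eq_top (hspan y) ?_
    rintro _ ⟨x, hyx, rfl⟩
    exact hR x y (heven hy hyx) hy (hammingDist_comm y x ▸ hyx)
  refine Matrix.eq_zero_of_mulVec_eq_zero_of_span_eq_top (hspan 0) ?_
  rintro _ ⟨y, hy, rfl⟩
  exact hRy (heven (by simp) hy)
end

section
/- Let n > 2r and n/r = n'/r' (as rationals). Then there is a graph homomorphism from the Kneser graph K_{n:r} to K_{n':r'} if and only if n divides n' (equivalently, r divides r' with the same quotient). -/
/-!
For a homomorphism `f : K_{n:r} → K_{n':r'}` and `i ∈ [n']`, the vertices whose image contains `i`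
form an intersecting family `𝒜ᵢ` of `r`-sets. Double counting gives
`∑ᵢ #𝒜ᵢ = r' · C(n, r) = n' · C(n-1, r-1)`, while Erdős–Ko–Rado bounds each `#𝒜ᵢ` by
`C(n-1, r-1)`; so every `𝒜ᵢ` is extremal, and for `n > 2r` an extremal family is a star with some
centre `g i`. Then `f S = g⁻¹ S`, so `#(g⁻¹ S) = r'` for every `r`-set `S`, which for `0 < r < n`
forces all fibres of `g` to have the same size: `n ∣ n'`. Conversely `S ↦ S × [m]` is a
homomorphism `K_{n:r} → K_{nm:rm}`.

Extremal families are stars by Katona's cycle method: in every cyclic order of `[n]` an extremal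
family contains exactly `r` of the `n` arcs of length `r`, and these are the `r` arcs through a
single point. If some `S` is in the family but `S - a + b` is not, a cyclic order in which
`S` and `S - a + b` are consecutive arcs forces every `r`-set containing `a` but not `b` into the
family, and from there the family is the star at `a`.
-/

/-- The Kneser graph `K_{n:r}`: vertices are the `r`-subsets of `[n]`, adjacent iff
disjoint. -/
def kneser (n r : ℕ) : SimpleGraph {S : Finset (Fin n) // S.card = r} where
  Adj S T := S ≠ T ∧ Disjoint (S : Finset (Fin n)) (T : Finset (Fin n))
  symm := ⟨fun S T h => ⟨h.1.symm, h.2.symm⟩⟩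
  loopless := ⟨fun S h => h.1 rfl⟩

open Finset
open scoped Nat

lemma Nat.mul_choose_sub_one_sub_one {n r : ℕ} (hn : 0 < n) (hr : 0 < r) :
    n * (n - 1).choose (r - 1) = n.choose r * r := by
  obtain ⟨n, rfl⟩ := Nat.exists_eq_add_one_of_ne_zero hn.ne'
  obtain ⟨r, rfl⟩ := Nat.exists_eq_add_one_of_ne_zero hr.ne'
  exact Nat.add_one_mul_choose_eq n r

namespace Finset

lemma injOn_fold_of_add_notMem {V : Finset ℕ} {r : ℕ} (hV : ∀ x ∈ V, x + r ∉ V) :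
    Set.InjOn (fun x => if x < r then x else x - r) V := by
  intro x hx y hy hxy
  have : x = y ∨ y = x + r ∨ x = y + r := by
    simp only at hxy
    split_ifs at hxy <;> omega
  rcases this with h | rfl | rfl
  · exact h
  · exact absurd hy (hV x hx)
  · exact absurd hx (hV y hy)

lemma card_le_of_add_notMem {V : Finset ℕ} {r : ℕ} (hV : V ⊆ range (2 * r))
    (h : ∀ x ∈ V, x + r ∉ V) : #V ≤ r := by
  calc #V ≤ #(range r) := by
        refine card_le_card_of_injOn _ (fun x hx => ?_) (injOn_fold_of_add_notMem h)
        have := mem_range.1 (hV hx)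
        simp only [coe_range, Set.mem_Iio]
        split_ifs <;> omega
    _ = r := card_range r

lemma mem_or_add_mem_of_card_eq {V : Finset ℕ} {r : ℕ} (hV : V ⊆ range (2 * r))
    (h : ∀ x ∈ V, x + r ∉ V) (hcard : #V = r) : ∀ j < r, j ∈ V ∨ j + r ∈ V := by
  have hfold : V.image (fun x => if x < r then x else x - r) = range r := by
    refine eq_of_subset_of_card_le (fun y hy => ?_) ?_
    · obtain ⟨x, hx, rfl⟩ := mem_image.1 hy
      have := mem_range.1 (hV hx)
      simp only [mem_range]
      split_ifs <;> omega
    · rw [card_image_of_injOn (injOn_fold_of_add_notMem h), hcard, card_range]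
  intro j hj
  obtain ⟨x, hx, hxj⟩ := mem_image.1 (hfold ▸ mem_range.2 hj)
  split_ifs at hxj with hxr
  · exact Or.inl (hxj ▸ hx)
  · exact Or.inr (by rwa [← hxj, Nat.sub_add_cancel (not_lt.1 hxr)])

lemma eq_Ico_of_add_notMem_of_card_eq {V : Finset ℕ} {r : ℕ} (hr : 0 < r)
    (hV : V ⊆ range (2 * r)) (h : ∀ x ∈ V, x + r ∉ V) (h' : ∀ x ∈ V, x + (r + 1) ∉ V)
    (hcard : #V = r) : ∃ m, V = Ico m (m + r) := by
  have hclass := mem_or_add_mem_of_card_eq hV h hcard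
  have hne : V.Nonempty := card_pos.1 (hcard ▸ hr)
  set m := V.min' hne
  have hmin : ∀ x ∈ V, m ≤ x := fun x hx => min'_le V x hx
  have hmr : m ≤ r := by
    have := card_le_card fun x hx => mem_Ico.2 ⟨hmin x hx, mem_range.1 (hV hx)⟩
    rw [Nat.card_Ico] at this
    omega
  have hsub : ∀ i < r, m + i ∈ V := by
    intro i
    induction i with
    | zero => exact fun _ => min'_mem V hne
    | succ i ih =>
      intro hi
      have hmi := ih (by omega)
      by_cases hc : m + (i + 1) < r
      · refine (hclass _ hc).resolve_right fun hmem => h' _ hmi ?_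
        convert hmem using 1
        omega
      · refine (hclass (m + (i + 1) - r) (by omega)).elim (fun hmem => ?_) fun hmem => ?_
        · exact absurd (hmin _ hmem) (by omega)
        · convert hmem using 1
          omega
  refine ⟨m, (eq_of_subset_of_card_le (fun x hx => ?_) ?_).symm⟩
  · obtain ⟨h1, h2⟩ := mem_Ico.1 hx
    convert hsub (x - m) (by omega) using 1
    omega
  · rw [hcard, Nat.card_Ico]
    omega

lemma apply_eq_apply_of_sum_const {α M : Type*} [Fintype α] [DecidableEq α]
    [AddCancelCommMonoid M] {f : α → M} {r : ℕ} {c : M} (hr : 0 < r)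
    (hrα : r < Fintype.card α) (h : ∀ s : Finset α, #s = r → ∑ x ∈ s, f x = c) (a b : α) :
    f a = f b := by
  obtain ⟨P, hP, hPc⟩ := exists_subset_card_eq (s := ({a, b} : Finset α)ᶜ) (n := r - 1) (by
    have := card_le_two (a := a) (b := b)
    rw [card_compl]
    omega)
  have haP : a ∉ P := fun h => by simpa using hP h
  have hbP : b ∉ P := fun h => by simpa using hP h
  have := (h _ (by rw [card_insert_of_notMem haP]; omega)).trans
    (h _ (by rw [card_insert_of_notMem hbP]; omega)).symm
  rwa [sum_insert haP, sum_insert hbP, add_left_inj] at this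

lemma mem_of_exchange_closed {α : Type*} [DecidableEq α] {𝒜 : Finset (Finset α)} {r : ℕ}
    (h𝒜r : (𝒜 : Set (Finset α)).Sized r)
    (hex : ∀ S ∈ 𝒜, ∀ a ∈ S, ∀ b ∉ S, insert b (S.erase a) ∈ 𝒜) {S R : Finset α}
    (hS : S ∈ 𝒜) (hR : #R = r) : R ∈ 𝒜 := by
  induction hk : #(R \ S) generalizing S with
  | zero =>
    rwa [eq_of_subset_of_card_le (sdiff_eq_empty_iff_subset.1 (card_eq_zero.1 hk))
      (by rw [hR, h𝒜r hS])]
  | succ k ih =>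
    obtain ⟨b, hb⟩ : (R \ S).Nonempty := card_pos.1 (by omega)
    obtain ⟨a, ha⟩ : (S \ R).Nonempty := by
      rw [← card_pos, ← card_sdiff_comm (hR.trans (h𝒜r hS).symm)]
      omega
    rw [mem_sdiff] at ha hb
    refine ih (hex S hS a ha.1 b hb.2) ?_
    have : R \ insert b (S.erase a) = (R \ S).erase b := by grind
    rw [this, card_erase_of_mem (mem_sdiff.2 hb), hk, Nat.add_sub_cancel]


lemma exists_exchange_notMem {α : Type*} [Fintype α] [DecidableEq α] {𝒜 : Finset (Finset α)}
    {r : ℕ} (hn : 2 * r ≤ Fintype.card α) (h𝒜 : (𝒜 : Set (Finset α)).Intersecting)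
    (h𝒜r : (𝒜 : Set (Finset α)).Sized r) (hne : 𝒜.Nonempty) :
    ∃ S ∈ 𝒜, ∃ a ∈ S, ∃ b ∉ S, insert b (S.erase a) ∉ 𝒜 := by
  by_contra! hclosed
  obtain ⟨S, hS⟩ := hne
  obtain ⟨A, -, hA⟩ := exists_subset_card_eq (s := (univ : Finset α)) (n := r) (by simp; omega)
  obtain ⟨B, hB, hBc⟩ := exists_subset_card_eq (s := Aᶜ) (n := r) (by rw [card_compl]; omega)
  exact h𝒜 (mem_of_exchange_closed h𝒜r hclosed hS hA)
    (mem_of_exchange_closed h𝒜r hclosed hS hBc) (disjoint_of_subset_right hB disjoint_compl_right)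

end Finset

lemma Fin.mem_iff_val_lt_card_of_isLowerSet {n : ℕ} {D : Finset (Fin n)}
    (hD : IsLowerSet (D : Set (Fin n))) (p : Fin n) : p ∈ D ↔ p.val < #D := by
  refine ⟨fun hp => ?_, fun hp => by_contra fun hpD => ?_⟩
  · have := card_le_card fun q hq => hD (mem_Iic.1 hq) hp
    rwa [Fin.card_Iic, Nat.add_one_le_iff] at this
  · have := card_le_card fun q hq => mem_Iio.2 (lt_of_not_ge fun hpq => hpD (hD hpq hq))
    rw [Fin.card_Iio] at this
    omega

section EquivCount
variable {α β : Type*} [Fintype α] [Fintype β] [DecidableEq α] [DecidableEq β]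

lemma card_filter_image_eq_congr (A : Finset α) {S S' : Finset β} (h : #S = #S') :
    #{σ : α ≃ β | A.image σ = S} = #{σ : α ≃ β | A.image σ = S'} := by
  obtain ⟨π, hπ⟩ := (Set.powersetCard.isPretransitive (α := β) (n := #S)).exists_smul_eq
    ⟨S, rfl⟩ ⟨S', h.symm⟩
  have hπS : S.image π = S' := by
    simpa [smul_finset_def] using congrArg Subtype.val hπ
  refine card_nbij' (fun σ => σ.trans π) (fun σ => σ.trans π.symm) (fun σ hσ => ?_)
    (fun σ hσ => ?_) (fun σ _ => by ext; simp) (fun σ _ => by ext; simp)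
  · simp only [coe_filter, mem_univ, true_and, Set.mem_ofPred_eq] at hσ ⊢
    rw [Equiv.coe_trans, ← image_image, hσ, hπS]
  · simp only [coe_filter, mem_univ, true_and, Set.mem_ofPred_eq] at hσ ⊢
    rw [Equiv.coe_trans, ← image_image, hσ, ← hπS, image_image]
    simp

lemma card_filter_image_eq_mul_choose (A : Finset α) {S : Finset β} (hS : #S = #A) :
    #{σ : α ≃ β | A.image σ = S} * (Fintype.card β).choose #A = Fintype.card (α ≃ β) := by
  symm
  calc Fintype.card (α ≃ β)
      = ∑ S' ∈ powersetCard #A univ, #{σ : α ≃ β | A.image σ = S'} := by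
        rw [← card_univ]
        exact card_eq_sum_card_fiberwise fun σ _ =>
          mem_powersetCard_univ.2 (card_image_of_injective _ σ.injective)
    _ = ∑ S' ∈ powersetCard #A univ, #{σ : α ≃ β | A.image σ = S} :=
        sum_congr rfl fun S' hS' =>
          card_filter_image_eq_congr A (mem_powersetCard_univ.1 hS' |>.trans hS.symm)
    _ = _ := by rw [sum_const, card_powersetCard, card_univ, smul_eq_mul, mul_comm]

end EquivCount

namespace ZMod
variable {n : ℕ} [NeZero n]

def valEquivFin : ZMod n ≃ Fin n where
  toFun z := ⟨z.val, z.val_lt⟩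
  invFun p := (p.val : ZMod n)
  left_inv z := natCast_zmod_val z
  right_inv p := Fin.ext (val_cast_of_lt p.2)

lemma card_equiv_fin : Fintype.card (ZMod n ≃ Fin n) = n ! := by
  rw [Fintype.card_equiv valEquivFin, ZMod.card]

/-- The arc `{t, t + 1, …, t + m - 1}` of the cycle `ZMod n`. -/
def arc (t : ZMod n) (m : ℕ) : Finset (ZMod n) := {s | (s - t).val < m}

@[simp] lemma mem_arc {t s : ZMod n} {m : ℕ} : s ∈ arc t m ↔ (s - t).val < m := by
  simp [arc]

lemma card_filter_sub_val_lt (p : ZMod n) {m : ℕ} (hm : m ≤ n) :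
    #{s : ZMod n | (p - s).val < m} = m := by
  rw [← card_range m]
  refine card_nbij' (fun s => (p - s).val) (fun i => p - i) (fun s hs => by simpa using hs)
    (fun i hi => ?_) (fun s _ => by simp) (fun i hi => ?_)
  all_goals
    have := mem_range.1 hi
    simp [val_cast_of_lt (this.trans_le hm), this]

lemma card_arc (t : ZMod n) {m : ℕ} (hm : m ≤ n) : #(arc t m) = m := by
  refine (card_equiv (Equiv.subRight t |>.trans (Equiv.neg _)) fun s => ?_).trans
    (card_filter_sub_val_lt 0 hm)
  simp

lemma arc_natCast_eq_sdiff {a m : ℕ} (h : a + m ≤ n) :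
    arc (a : ZMod n) m = arc 0 (a + m) \ arc 0 a := by
  ext z
  have hz := z.val_lt
  simp only [mem_arc, mem_sdiff, sub_zero, not_lt]
  rcases le_or_gt a z.val with hza | hza
  · have : z - a = ((z.val - a : ℕ) : ZMod n) := by
      rw [Nat.cast_sub hza, natCast_zmod_val]
    rw [this, val_cast_of_lt (by omega)]
    omega
  · have : z - a = ((n + z.val - a : ℕ) : ZMod n) := by
      rw [Nat.cast_sub (by omega), Nat.cast_add, natCast_self, zero_add, natCast_zmod_val]
    rw [this, val_cast_of_lt (by omega)]
    omega

/-- The arcs of length `r` starting at `s` and `t` meet. -/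
def IsNear (r : ℕ) (s t : ZMod n) : Prop := (s - t).val < r ∨ (t - s).val < r

lemma isNear_of_mem_arc {s t z : ZMod n} {r : ℕ} (hzt : z ∈ arc t r) (hzs : z ∈ arc s r) :
    IsNear r s t := by
  rw [mem_arc] at hzt hzs
  have hst : s - t = ((z - t).val : ZMod n) - ((z - s).val : ZMod n) := by
    simp only [natCast_zmod_val]
    ring
  rcases le_total (z - s).val (z - t).val with h | h
  · left
    rw [hst, ← Nat.cast_sub h, val_natCast]
    exact (Nat.mod_le _ _).trans_lt (by omega)
  · right
    rw [← neg_sub, hst, neg_sub, ← Nat.cast_sub h, val_natCast]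
    exact (Nat.mod_le _ _).trans_lt (by omega)

lemma not_isNear_of_sub_eq {s t : ZMod n} {r d : ℕ} (hr : 0 < r) (hrd : r ≤ d)
    (hdn : d + r ≤ n) (h : s - t = d) : ¬IsNear r s t := by
  have hd : (s - t).val = d := by rw [h, val_cast_of_lt (by omega)]
  have hne : s - t ≠ 0 := fun h0 => by rw [h0, val_zero] at hd; omega
  rw [IsNear, show t - s = -(s - t) by ring, neg_val, if_neg hne, hd]
  omega

lemma val_sub_add_lt_of_isNear {t t₀ : ZMod n} {r : ℕ} (h : IsNear r t t₀) :
    (t - t₀ + r).val < 2 * r := by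
  rcases h with h | h
  · have : t - t₀ + r = ((t - t₀).val + r : ℕ) := by
      push_cast [natCast_zmod_val]
      ring
    rw [this, val_natCast]
    exact (Nat.mod_le _ _).trans_lt (by omega)
  · have : t - t₀ + r = (r - (t₀ - t).val : ℕ) := by
      rw [Nat.cast_sub h.le, natCast_zmod_val]
      ring
    rw [this, val_natCast]
    exact (Nat.mod_le _ _).trans_lt (by omega)

lemma sub_eq_of_val_sub_add_eq {s t t₀ : ZMod n} {r d : ℕ}
    (h : (s - t₀ + r).val = (t - t₀ + r).val + d) : s - t = d := by
  have := congrArg (fun k : ℕ => (k : ZMod n)) h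
  simp only [Nat.cast_add, natCast_zmod_val] at this
  linear_combination this

lemma eq_of_sub_val_lt_of_le_sub_val {p q : ZMod n} {r : ℕ} (h : (p - q).val < r)
    (h' : r ≤ (p - (q + 1)).val) : p = q := by
  by_contra hpq
  have hpos : 0 < (p - q).val := by
    rw [Nat.pos_iff_ne_zero, Ne, val_eq_zero, sub_eq_zero]
    exact hpq
  have : p - (q + 1) = ((p - q).val - 1 : ℕ) := by
    rw [Nat.cast_sub hpos, natCast_zmod_val]
    push_cast
    ring
  rw [this, val_natCast] at h'
  have := Nat.mod_le ((p - q).val - 1) n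
  omega

variable {T : Finset (ZMod n)} {r : ℕ}

/- In both lemmas below, `t ↦ (t - t₀ + r).val` sends the points near a fixed `t₀ ∈ T` into
`[0, 2r)`, where two points at distance `r` or `r + 1` are not near. -/

lemma card_le_of_forall_isNear (hn : 2 * r ≤ n) (hT : ∀ s ∈ T, ∀ t ∈ T, IsNear r s t) :
    #T ≤ r := by
  obtain rfl | ⟨t₀, ht₀⟩ := T.eq_empty_or_nonempty
  · simp
  have hr : 0 < r := by simpa [IsNear] using hT t₀ ht₀ t₀ ht₀
  set ψ := fun t : ZMod n => (t - t₀ + r).val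
  have hψ : Function.Injective ψ := fun a b h => by simpa using val_injective n h
  rw [← card_image_of_injective T hψ]
  refine card_le_of_add_notMem (fun x hx => ?_) fun x hx hx' => ?_
  · obtain ⟨t, ht, rfl⟩ := mem_image.1 hx
    exact mem_range.2 (val_sub_add_lt_of_isNear (hT t ht t₀ ht₀))
  · obtain ⟨t, ht, rfl⟩ := mem_image.1 hx
    obtain ⟨s, hs, hst⟩ := mem_image.1 hx'
    exact not_isNear_of_sub_eq hr le_rfl (by omega) (sub_eq_of_val_sub_add_eq hst) (hT s hs t ht)

lemma exists_forall_mem_iff_of_forall_isNear (hr : 0 < r) (hn : 2 * r < n)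
    (hT : ∀ s ∈ T, ∀ t ∈ T, IsNear r s t) (hcard : #T = r) :
    ∃ p : ZMod n, ∀ s, s ∈ T ↔ (p - s).val < r := by
  obtain ⟨t₀, ht₀⟩ := card_pos.1 (hcard ▸ hr)
  set ψ := fun t : ZMod n => (t - t₀ + r).val
  have hψ : Function.Injective ψ := fun a b h => by simpa using val_injective n h
  obtain ⟨m, hm⟩ : ∃ m, T.image ψ = Ico m (m + r) := by
    refine eq_Ico_of_add_notMem_of_card_eq hr (fun x hx => ?_) (fun x hx hx' => ?_)
      (fun x hx hx' => ?_) (by rw [card_image_of_injective T hψ, hcard])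
    · obtain ⟨t, ht, rfl⟩ := mem_image.1 hx
      exact mem_range.2 (val_sub_add_lt_of_isNear (hT t ht t₀ ht₀))
    all_goals
      obtain ⟨t, ht, rfl⟩ := mem_image.1 hx
      obtain ⟨s, hs, hst⟩ := mem_image.1 hx'
      exact not_isNear_of_sub_eq hr (by omega) (by omega) (sub_eq_of_val_sub_add_eq hst)
        (hT s hs t ht)
  set p := t₀ - r + ((m + r - 1 : ℕ) : ZMod n)
  have hsub : T ⊆ ({s | (p - s).val < r} : Finset (ZMod n)) := fun s hs => by
    have hψs := mem_Ico.1 (hm ▸ mem_image_of_mem ψ hs)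
    have : p - s = (m + r - 1 - ψ s : ℕ) := by
      rw [Nat.cast_sub (show ψ s ≤ m + r - 1 by omega), natCast_zmod_val]
      ring
    rw [mem_filter, this, val_natCast]
    exact ⟨mem_univ _, (Nat.mod_le _ _).trans_lt (by omega)⟩
  have hT : T = ({s | (p - s).val < r} : Finset (ZMod n)) :=
    eq_of_subset_of_card_le hsub (by rw [card_filter_sub_val_lt p (by omega), hcard])
  exact ⟨p, fun s => by simp [hT]⟩

end ZMod

section CyclicOrder
open ZMod
variable {n r : ℕ} [NeZero n] {𝒜 : Finset (Finset (Fin n))}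

lemma exists_equiv_image_arc_zero_eq_filter_lt (key : Fin n → ℕ) :
    ∃ τ : ZMod n ≃ Fin n, ∀ c,
      (arc 0 #{x | key x < c}).image τ = ({x | key x < c} : Finset (Fin n)) := by
  set π := Tuple.sort key
  refine ⟨valEquivFin.trans π, fun c => ?_⟩
  set D : Finset (Fin n) := {p | key (π p) < c}
  have hD : IsLowerSet (D : Set (Fin n)) := fun p q hqp hp => by
    simp only [D, coe_filter, mem_univ, true_and, Set.mem_ofPred_eq] at hp ⊢
    exact (Tuple.monotone_sort key hqp).trans_lt hp
  have hcard : #D = #{x | key x < c} := card_equiv π (by simp [D])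
  ext x
  simp only [mem_image, mem_arc, sub_zero, mem_filter, mem_univ, true_and, Equiv.trans_apply]
  constructor
  · rintro ⟨z, hz, rfl⟩
    have := (Fin.mem_iff_val_lt_card_of_isLowerSet hD (valEquivFin z)).2 (hcard ▸ hz)
    simpa [D] using this
  · intro hx
    refine ⟨valEquivFin.symm (π.symm x), ?_, by simp⟩
    have := (Fin.mem_iff_val_lt_card_of_isLowerSet hD (π.symm x)).1 (by simpa [D] using hx)
    rw [← hcard]
    simpa [valEquivFin, Nat.mod_eq_of_lt (π.symm x).2] using this

lemma exists_equiv_image_arc_zero_eq_of_monotone {m : ℕ} (C : Fin m → Finset (Fin n))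
    (hC : Monotone C) : ∃ τ : ZMod n ≃ Fin n, ∀ j, (arc 0 #(C j)).image τ = C j := by
  set key : Fin n → ℕ := fun x => #{j | x ∉ C j}
  have hkey : ∀ j, ({x | key x < j.val + 1} : Finset (Fin n)) = C j := by
    intro j
    ext x
    simp only [mem_filter, mem_univ, true_and, key, Nat.lt_add_one_iff]
    refine ⟨fun hx => by_contra fun hxj => ?_, fun hxj => ?_⟩
    · have : Iic j ⊆ ({i | x ∉ C i} : Finset (Fin m)) := fun i hi =>
        mem_filter.2 ⟨mem_univ i, fun hxi => hxj (hC (mem_Iic.1 hi) hxi)⟩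
      have := card_le_card this
      rw [Fin.card_Iic] at this
      omega
    · have := card_le_card fun i (hi : i ∈ ({i | x ∉ C i} : Finset (Fin m))) =>
        mem_Iio.2 (lt_of_not_ge fun hji => (mem_filter.1 hi).2 (hC hji hxj))
      rwa [Fin.card_Iio] at this
  obtain ⟨τ, hτ⟩ := exists_equiv_image_arc_zero_eq_filter_lt key
  refine ⟨τ, fun j => ?_⟩
  have := hτ (j.val + 1)
  rwa [hkey j] at this

/- Order `Fin n` as `R \ S`, then `a`, then the rest of `R`, then `S \ R`, then `b`, then
everything else. -/
lemma exists_equiv_image_arcs_of_exchange {R S : Finset (Fin n)} {a b : Fin n} (hR : #R = r)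
    (hS : #S = r) (haR : a ∈ R) (haS : a ∈ S) (hbR : b ∉ R) (hbS : b ∉ S) :
    ∃ τ : ZMod n ≃ Fin n, (arc 0 r).image τ = R ∧ (arc (#(R \ S) : ZMod n) r).image τ = S ∧
      (arc ((#(R \ S) + 1 : ℕ) : ZMod n) r).image τ = insert b (S.erase a) := by
  set k := #(R \ S)
  have haU : a ∉ R \ S := fun h => (mem_sdiff.1 h).2 haS
  have hbRS : b ∉ R ∪ S := by simp [hbR, hbS]
  have hRS : #(R ∪ S) = k + r := by rw [← card_sdiff_add_card, hS]
  have hC : Monotone ![R \ S, insert a (R \ S), R, R ∪ S, insert b (R ∪ S)] := by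
    refine Fin.monotone_iff_le_succ.2 fun i => ?_
    fin_cases i
    · exact subset_insert _ _
    · exact insert_subset haR sdiff_subset
    · exact subset_union_left
    · exact subset_insert _ _
  obtain ⟨τ, hτ⟩ := exists_equiv_image_arc_zero_eq_of_monotone _ hC
  have h0 := hτ 0
  have h1 := hτ 1
  have h2 := hτ 2
  have h3 := hτ 3
  have h4 := hτ 4
  simp only [Matrix.cons_val, card_insert_of_notMem haU, card_insert_of_notMem hbRS, hRS,
    hR] at h0 h1 h2 h3 h4
  have hn : k + 1 + r ≤ n := by
    simpa [hRS, card_insert_of_notMem hbRS, add_right_comm] using card_le_univ (insert b (R ∪ S))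
  refine ⟨τ, h2, ?_, ?_⟩
  · rw [arc_natCast_eq_sdiff (by omega), image_sdiff _ _ τ.injective, h3, h0]
    ext x
    grind
  · rw [arc_natCast_eq_sdiff hn, image_sdiff _ _ τ.injective, add_right_comm, h4, h1]
    ext x
    grind

def cyclicArcs (𝒜 : Finset (Finset (Fin n))) (σ : ZMod n ≃ Fin n) (r : ℕ) : Finset (ZMod n) :=
  {t | (arc t r).image σ ∈ 𝒜}

lemma isNear_of_mem_cyclicArcs (h𝒜 : (𝒜 : Set (Finset (Fin n))).Intersecting)
    {σ : ZMod n ≃ Fin n} {s t : ZMod n} (hs : s ∈ cyclicArcs 𝒜 σ r)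
    (ht : t ∈ cyclicArcs 𝒜 σ r) : IsNear r s t := by
  simp only [cyclicArcs, mem_filter, mem_univ, true_and] at hs ht
  obtain ⟨x, hxs, hxt⟩ := not_disjoint_iff.1 (h𝒜 hs ht)
  obtain ⟨z, hzs, rfl⟩ := mem_image.1 hxs
  obtain ⟨z', hzt, hzz'⟩ := mem_image.1 hxt
  rw [σ.injective hzz'] at hzt
  exact isNear_of_mem_arc hzt hzs

lemma card_cyclicArcs_le (hn : 2 * r ≤ n) (h𝒜 : (𝒜 : Set (Finset (Fin n))).Intersecting)
    (σ : ZMod n ≃ Fin n) : #(cyclicArcs 𝒜 σ r) ≤ r :=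
  card_le_of_forall_isNear hn fun _ hs _ ht => isNear_of_mem_cyclicArcs h𝒜 hs ht

lemma choose_mul_sum_card_cyclicArcs (hrn : r ≤ n) (h𝒜r : (𝒜 : Set (Finset (Fin n))).Sized r) :
    n.choose r * ∑ σ : ZMod n ≃ Fin n, #(cyclicArcs 𝒜 σ r) = n * (#𝒜 * n !) := by
  have hfiber : ∀ t : ZMod n, ∀ S ∈ 𝒜,
      #{σ : ZMod n ≃ Fin n | (arc t r).image σ = S} * n.choose r = n ! := by
    intro t S hS
    have := card_filter_image_eq_mul_choose (arc t r) (β := Fin n)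
      ((h𝒜r hS).trans (card_arc t hrn).symm)
    rwa [card_arc t hrn, Fintype.card_fin, card_equiv_fin] at this
  have hswap : ∑ σ : ZMod n ≃ Fin n, #(cyclicArcs 𝒜 σ r)
      = ∑ t : ZMod n, #{σ : ZMod n ≃ Fin n | (arc t r).image σ ∈ 𝒜} := by
    simp only [cyclicArcs, card_filter]
    exact sum_comm
  calc n.choose r * ∑ σ : ZMod n ≃ Fin n, #(cyclicArcs 𝒜 σ r)
      = ∑ t : ZMod n, ∑ S ∈ 𝒜, #{σ : ZMod n ≃ Fin n | (arc t r).image σ = S} * n.choose r := by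
        rw [hswap, mul_sum]
        refine sum_congr rfl fun t _ => ?_
        have := card_eq_sum_card_fiberwise (f := fun σ : ZMod n ≃ Fin n => (arc t r).image σ)
          (t := 𝒜) (s := {σ : ZMod n ≃ Fin n | (arc t r).image σ ∈ 𝒜})
          fun σ hσ => by simpa using hσ
        rw [this, mul_sum]
        refine sum_congr rfl fun S hS => ?_
        rw [filter_filter, mul_comm]
        congr 2
        ext σ
        simp only [mem_filter, mem_univ, true_and, and_iff_right_iff_imp]
        exact fun h => h ▸ hS
    _ = n * (#𝒜 * n !) := by
        rw [sum_congr rfl fun t _ => sum_congr rfl (hfiber t)]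
        simp [ZMod.card]

lemma card_cyclicArcs_eq (hr : 0 < r) (hn : 2 * r ≤ n)
    (h𝒜 : (𝒜 : Set (Finset (Fin n))).Intersecting) (h𝒜r : (𝒜 : Set (Finset (Fin n))).Sized r)
    (hcard : #𝒜 = (n - 1).choose (r - 1)) (σ : ZMod n ≃ Fin n) : #(cyclicArcs 𝒜 σ r) = r := by
  have hsum : ∑ σ : ZMod n ≃ Fin n, #(cyclicArcs 𝒜 σ r) = ∑ _σ : ZMod n ≃ Fin n, r := by
    refine Nat.eq_of_mul_eq_mul_left (Nat.choose_pos (n := n) (k := r) (by omega)) ?_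
    rw [choose_mul_sum_card_cyclicArcs (by omega) h𝒜r, sum_const, card_univ, card_equiv_fin,
      hcard, smul_eq_mul, ← mul_assoc, Nat.mul_choose_sub_one_sub_one (NeZero.pos n) hr]
    ring
  exact (sum_eq_sum_iff_of_le fun σ _ => card_cyclicArcs_le hn h𝒜 σ).1 hsum σ (mem_univ σ)

lemma exists_forall_image_arc_mem_iff (hr : 0 < r) (hn : 2 * r < n)
    (h𝒜 : (𝒜 : Set (Finset (Fin n))).Intersecting) (h𝒜r : (𝒜 : Set (Finset (Fin n))).Sized r)
    (hcard : #𝒜 = (n - 1).choose (r - 1)) (σ : ZMod n ≃ Fin n) :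
    ∃ p : ZMod n, ∀ t, (arc t r).image σ ∈ 𝒜 ↔ (p - t).val < r := by
  obtain ⟨p, hp⟩ := exists_forall_mem_iff_of_forall_isNear hr hn
    (fun _ hs _ ht => isNear_of_mem_cyclicArcs h𝒜 hs ht)
    (card_cyclicArcs_eq hr hn.le h𝒜 h𝒜r hcard σ)
  exact ⟨p, fun t => by simpa [cyclicArcs] using hp t⟩

/- In the cyclic order of `exists_equiv_image_arcs_of_exchange`, the arcs in `𝒜` are the `r`
arcs ending at some point `p`; `S` is one of them and the next arc is not, so `p` is the last
point of `S`, which the arc `R` also contains. -/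
lemma mem_of_exchange_notMem (hr : 0 < r) (hn : 2 * r < n)
    (h𝒜 : (𝒜 : Set (Finset (Fin n))).Intersecting) (h𝒜r : (𝒜 : Set (Finset (Fin n))).Sized r)
    (hcard : #𝒜 = (n - 1).choose (r - 1)) {S : Finset (Fin n)} {a b : Fin n} (hS : S ∈ 𝒜)
    (ha : a ∈ S) (hb : b ∉ S) (hex : insert b (S.erase a) ∉ 𝒜) {R : Finset (Fin n)}
    (hR : #R = r) (haR : a ∈ R) (hbR : b ∉ R) : R ∈ 𝒜 := by
  obtain ⟨τ, hτR, hτS, hτex⟩ := exists_equiv_image_arcs_of_exchange hR (h𝒜r hS) haR ha hbR hb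
  obtain ⟨p, hp⟩ := exists_forall_image_arc_mem_iff hr hn h𝒜 h𝒜r hcard τ
  have hk : #(R \ S) < r := by
    have := card_le_card (show R \ S ⊆ R.erase a by grind)
    rw [card_erase_of_mem haR] at this
    omega
  have hpk : p = #(R \ S) := by
    refine eq_of_sub_val_lt_of_le_sub_val ((hp _).1 (by rwa [hτS])) (not_lt.1 fun h => hex ?_)
    rw [← hτex, hp]
    push_cast
    exact h
  rw [← hτR, hp, hpk, sub_zero, val_cast_of_lt (by omega)]
  exact hk

lemma center_mem_of_exchange_notMem (hr : 0 < r) (hn : 2 * r < n)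
    (h𝒜 : (𝒜 : Set (Finset (Fin n))).Intersecting) (h𝒜r : (𝒜 : Set (Finset (Fin n))).Sized r)
    (hcard : #𝒜 = (n - 1).choose (r - 1)) {S : Finset (Fin n)} {a b : Fin n} (hS : S ∈ 𝒜)
    (ha : a ∈ S) (hb : b ∉ S) (hex : insert b (S.erase a) ∉ 𝒜) {M : Finset (Fin n)}
    (hM : M ∈ 𝒜) : a ∈ M := by
  by_contra haM
  obtain ⟨Q, hQ, hQc⟩ := exists_subset_card_eq (s := (insert a (insert b M))ᶜ) (n := r - 1) (by
    have := card_insert_le a (insert b M)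
    have := card_insert_le b M
    rw [card_compl, Fintype.card_fin]
    have := h𝒜r hM
    omega)
  have hQ' : ∀ x ∈ Q, x ≠ a ∧ x ≠ b ∧ x ∉ M := fun x hx => by simpa using hQ hx
  have haQ : a ∉ Q := fun h => (hQ' a h).1 rfl
  have hR : insert a Q ∈ 𝒜 := mem_of_exchange_notMem hr hn h𝒜 h𝒜r hcard hS ha hb hex
    (by rw [card_insert_of_notMem haQ, hQc]; omega) (mem_insert_self a Q)
    (by simpa using ⟨fun h => hb (h ▸ ha), fun h => (hQ' b h).2.1 rfl⟩)
  exact h𝒜 hR hM (disjoint_insert_left.2 ⟨haM, disjoint_left.2 fun x hx => (hQ' x hx).2.2⟩)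

end CyclicOrder

theorem exists_center_of_intersecting_of_card_eq {n r : ℕ} {𝒜 : Finset (Finset (Fin n))}
    (hr : 0 < r) (hn : 2 * r < n)
    (h𝒜 : (𝒜 : Set (Finset (Fin n))).Intersecting) (h𝒜r : (𝒜 : Set (Finset (Fin n))).Sized r)
    (hcard : #𝒜 = (n - 1).choose (r - 1)) :
    ∃ a : Fin n, ∀ s : Finset (Fin n), #s = r → (s ∈ 𝒜 ↔ a ∈ s) := by
  have : NeZero n := ⟨by omega⟩
  obtain ⟨S, hS, a, ha, b, hb, hex⟩ := exists_exchange_notMem (by simp; omega) h𝒜 h𝒜r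
    (card_pos.1 (hcard ▸ Nat.choose_pos (by omega)))
  have hcenter : ∀ M ∈ 𝒜, a ∈ M := fun M hM =>
    center_mem_of_exchange_notMem hr hn h𝒜 h𝒜r hcard hS ha hb hex hM
  refine ⟨a, fun M hM => ⟨hcenter M, fun haM => ?_⟩⟩
  obtain ⟨c, -, hc⟩ := exists_mem_notMem_of_card_lt_card (s := S ∪ M) (t := univ) (by
    have := card_union_le S M
    rw [card_univ, Fintype.card_fin, h𝒜r hS, hM] at *
    omega)
  rw [mem_union, not_or] at hc
  refine mem_of_exchange_notMem hr hn h𝒜 h𝒜r hcard hS ha hc.1 (fun h => ?_) hM haM hc.2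
  have := hcenter _ h
  grind

lemma dvd_of_forall_card_filter_mem_eq {n n' r r' : ℕ} (g : Fin n' → Fin n) (hr : 0 < r)
    (hrn : r < n) (h : ∀ s : Finset (Fin n), #s = r → #{i | g i ∈ s} = r') : n ∣ n' := by
  have hfiber : ∀ s : Finset (Fin n), #{i | g i ∈ s} = ∑ j ∈ s, #{i | g i = j} := fun s => by
    rw [card_eq_sum_card_fiberwise (f := g) (t := s) fun i hi => by simpa using hi]
    refine sum_congr rfl fun j hj => congrArg card ?_
    ext i
    simp only [mem_filter, mem_univ, true_and, and_iff_right_iff_imp]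
    exact fun h => h ▸ hj
  have hconst := apply_eq_apply_of_sum_const (f := fun j => #{i | g i = j}) hr (by simpa using hrn)
    fun s hs => (hfiber s).symm.trans (h s hs)
  refine ⟨#{i | g i = ⟨0, by omega⟩}, ?_⟩
  have := card_eq_sum_card_fiberwise (f := g) (s := univ) (t := univ) fun i _ => mem_univ _
  rw [card_univ, Fintype.card_fin] at this
  calc n' = ∑ j, #{i | g i = j} := this
    _ = _ := by
      rw [sum_congr rfl fun j _ => hconst j ⟨0, by omega⟩, sum_const, card_univ,
        Fintype.card_fin, smul_eq_mul]

section KneserHom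
variable {n r n' r' : ℕ} (f : kneser n r →g kneser n' r')

def preimageFamily (i : Fin n') : Finset (Finset (Fin n)) :=
  ({v | i ∈ (f v : Finset (Fin n'))} : Finset _).map (Function.Embedding.subtype _)

lemma mem_preimageFamily {i : Fin n'} {v : {S : Finset (Fin n) // S.card = r}} :
    v.1 ∈ preimageFamily f i ↔ i ∈ (f v : Finset (Fin n')) := by
  simp [preimageFamily, v.2]

lemma sized_preimageFamily (i : Fin n') : (preimageFamily f i : Set (Finset (Fin n))).Sized r :=
  fun s hs => by
    obtain ⟨v, -, rfl⟩ := mem_map.1 hs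
    exact v.2

lemma intersecting_preimageFamily (hr : 0 < r) (i : Fin n') :
    (preimageFamily f i : Set (Finset (Fin n))).Intersecting := by
  rintro _ hs _ ht hdisj
  obtain ⟨v, hv, rfl⟩ := mem_map.1 hs
  obtain ⟨w, hw, rfl⟩ := mem_map.1 ht
  by_cases hvw : v = w
  · subst hvw
    have := v.2
    simp_all
  · exact not_disjoint_iff.2 ⟨i, (mem_filter.1 hv).2, (mem_filter.1 hw).2⟩
      (f.map_rel ⟨hvw, hdisj⟩).2

lemma sum_card_preimageFamily : ∑ i, #(preimageFamily f i) = n.choose r * r' := by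
  calc ∑ i, #(preimageFamily f i) = ∑ v, #(f v : Finset (Fin n')) := by
        simp only [preimageFamily, card_map, card_filter]
        rw [sum_comm]
        simp
    _ = n.choose r * r' := by
        simp only [fun v => (f v).2, sum_const, card_univ, Fintype.card_finset_len,
          Fintype.card_fin, smul_eq_mul]

lemma exists_eq_preimage_of_kneserHom (hr : 0 < r) (hn : 2 * r < n) (hcross : n * r' = n' * r) :
    ∃ g : Fin n' → Fin n, ∀ v,
      (f v : Finset (Fin n')) = ({i | g i ∈ (v : Finset (Fin n))} : Finset _) := by
  have hsum : ∑ i, #(preimageFamily f i) = ∑ _i : Fin n', (n - 1).choose (r - 1) := by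
    refine Nat.eq_of_mul_eq_mul_left (by omega : 0 < n) ?_
    rw [sum_card_preimageFamily, sum_const, card_univ, Fintype.card_fin, smul_eq_mul]
    calc n * (n.choose r * r') = n.choose r * (n * r') := by ring
      _ = n' * (n.choose r * r) := by rw [hcross]; ring
      _ = n * (n' * (n - 1).choose (r - 1)) := by
        rw [← Nat.mul_choose_sub_one_sub_one (by omega) hr]
        ring
  have hmax : ∀ i, #(preimageFamily f i) = (n - 1).choose (r - 1) := fun i =>
    (sum_eq_sum_iff_of_le fun i _ => erdos_ko_rado (intersecting_preimageFamily f hr i)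
      (sized_preimageFamily f i) (by omega)).1 hsum i (mem_univ i)
  choose g hg using fun i => exists_center_of_intersecting_of_card_eq hr hn
    (intersecting_preimageFamily f hr i) (sized_preimageFamily f i) (hmax i)
  refine ⟨g, fun v => ?_⟩
  ext i
  rw [← mem_preimageFamily, hg i v.1 v.2]
  simp

end KneserHom

def kneserBlowUp (n r m : ℕ) (hm : 0 < m) : kneser n r →g kneser (n * m) (r * m) where
  toFun S := ⟨(S.1 ×ˢ univ).map finProdFinEquiv.toEmbedding, by simp [S.2]⟩
  map_rel' h := by
    refine ⟨fun hST => h.1 (Subtype.ext ?_), ?_⟩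
    · ext x
      have := congrArg (fun P => finProdFinEquiv (x, (⟨0, hm⟩ : Fin m)) ∈ P.1) hST
      simpa using this
    · simpa [disjoint_map, disjoint_product] using Or.inl h.2

/-- (Stahl) For `n > 2r` and `n/r = n'/r'`, there is a homomorphism
`K_{n:r} → K_{n':r'}` iff `n` divides `n'`. -/
theorem stmt16 (n r n' r' : ℕ) (hr : 0 < r) (h1 : 2 * r < n)
    (h2 : (n : ℚ) / (r : ℚ) = (n' : ℚ) / (r' : ℚ)) :
    Nonempty (kneser n r →g kneser n' r') ↔ n ∣ n' := by
  have hr' : r' ≠ 0 := by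
    rintro rfl
    rw [Nat.cast_zero, div_zero, div_eq_zero_iff] at h2
    norm_cast at h2
    omega
  have hcross : n * r' = n' * r := by
    exact_mod_cast (div_eq_div_iff (by positivity) (by positivity)).1 h2
  constructor
  · rintro ⟨f⟩
    obtain ⟨g, hg⟩ := exists_eq_preimage_of_kneserHom f hr h1 hcross
    exact dvd_of_forall_card_filter_mem_eq g hr (by omega) fun s hs => hg ⟨s, hs⟩ ▸ (f ⟨s, hs⟩).2
  · rintro ⟨m, rfl⟩
    obtain rfl : r' = r * m := Nat.eq_of_mul_eq_mul_left (by omega : 0 < n) (by rw [hcross]; ring)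
    exact ⟨kneserBlowUp n r m (Nat.pos_of_ne_zero (right_ne_zero_of_mul hr'))⟩
end

section
/- Let G be a 1-walk-regular graph with canonical vector coloring i ↦ p_i ∈ ℝ^d, where d is the multiplicity of the least eigenvalue. Define p_e = p_i p_jᵀ + p_j p_iᵀ for each edge e = {i,j}. Then G is uniquely vector colorable if and only if the span of {p_e : e ∈ E(G)} in the space of symmetric d×d matrices has dimension d(d+1)/2, i.e., equals the full space of symmetric matrices. -/
open SimpleGraph Finset

/-- `G` is 1-walk-regular: for every `ℓ`, the diagonal of `Aˡ` is constant and the entries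
of `Aˡ` on edges are constant. -/
def IsOneWalkRegular {V : Type*} [Fintype V] [DecidableEq V]
    (G : SimpleGraph V) [DecidableRel G.Adj] : Prop :=
  ∀ ℓ : ℕ, (∃ a : ℝ, ∀ i, ((G.adjMatrix ℝ) ^ ℓ) i i = a) ∧
    (∃ b : ℝ, ∀ i j, G.Adj i j → ((G.adjMatrix ℝ) ^ ℓ) i j = b)

/-!
Every `p_e` is symmetric, and for symmetric `R` one has `tr (R p_e) = 2 p_iᵀ R p_j`. Since
`τ p_i = ∑_{j ~ i} p_j` with `τ ≠ 0`, the vanishing of `p_iᵀ R p_j` on edges forces it on the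
diagonal, so unique vector colorability says that no nonzero symmetric `R` is trace-orthogonal to
all `p_e`. If the `p_e` span the symmetric matrices this holds because the trace form is positive
definite there; conversely, it makes `R ↦ tr (R ·)` embed the symmetric matrices into the dual of
the span, which therefore has the full dimension `d(d+1)/2`.
-/

theorem Submodule.eq_of_le_of_forall_orthogonal_eq_zero {K E : Type*} [Field K] [AddCommGroup E]
    [Module K E] [FiniteDimensional K E] (B : E →ₗ[K] E →ₗ[K] K) {W S : Submodule K E}
    (hWS : W ≤ S) (h : ∀ x ∈ S, (∀ w ∈ W, B x w = 0) → x = 0) : W = S := by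
  have hinj : Function.Injective (B.domRestrict₁₂ S W) := by
    refine (injective_iff_map_eq_zero _).2 fun x hx => Subtype.ext (h x x.2 fun w hw => ?_)
    exact LinearMap.congr_fun hx ⟨w, hw⟩
  refine Submodule.eq_of_le_of_finrank_le hWS ?_
  simpa using LinearMap.finrank_le_finrank_of_injective hinj

namespace Matrix

variable {n R : Type*}

def symmetricSubmodule (n R : Type*) [CommSemiring R] : Submodule R (Matrix n n R) where
  carrier := {M | M.IsSymm}
  add_mem' := IsSymm.add
  zero_mem' := isSymm_zero
  smul_mem' c _ h := h.smul c

def symmetricSubmoduleEquiv (n R : Type*) [CommSemiring R] :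
    symmetricSubmodule n R ≃ₗ[R] (Sym2 n → R) where
  toFun M := Sym2.lift ⟨M.1, fun i j => M.2.apply j i⟩
  invFun f := ⟨of fun i j => f s(i, j), IsSymm.ext fun _ _ => congrArg f Sym2.eq_swap⟩
  map_add' _ _ := funext <| Sym2.ind fun _ _ => rfl
  map_smul' _ _ := funext <| Sym2.ind fun _ _ => rfl
  left_inv _ := rfl
  right_inv _ := funext <| Sym2.ind fun _ _ => rfl

theorem finrank_symmetricSubmodule [Fintype n] [DecidableEq n] (K : Type*) [Field K] :
    Module.finrank K (symmetricSubmodule n K) = (Fintype.card n + 1).choose 2 := by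
  rw [(symmetricSubmoduleEquiv n K).finrank_eq, Module.finrank_fintype_fun_eq_card, Sym2.card]

def traceForm (n R : Type*) [Fintype n] [CommSemiring R] :
    Matrix n n R →ₗ[R] Matrix n n R →ₗ[R] R :=
  (LinearMap.mul R (Matrix n n R)).compr₂ (traceLinearMap n R R)

theorem trace_mul_self_eq_zero_iff_of_isSymm [Fintype n] {M : Matrix n n ℝ} (hM : M.IsSymm) :
    trace (M * M) = 0 ↔ M = 0 := by
  rw [← trace_conjTranspose_mul_self_eq_zero_iff, conjTranspose_eq_transpose_of_trivial, hM.eq]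

theorem span_eq_symmetricSubmodule_iff [Fintype n] [DecidableEq n] {S : Set (Matrix n n ℝ)}
    (hS : ∀ M ∈ S, M.IsSymm) :
    Submodule.span ℝ S = symmetricSubmodule n ℝ ↔
      ∀ R : Matrix n n ℝ, R.IsSymm → (∀ M ∈ S, trace (R * M) = 0) → R = 0 := by
  have hspan : ∀ R, (∀ M ∈ S, trace (R * M) = 0) →
      ∀ M ∈ Submodule.span ℝ S, traceForm n ℝ R M = 0 := fun R hR M hM =>
    (Submodule.span_le (p := LinearMap.ker (traceForm n ℝ R))).2 hR hM
  constructor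
  · intro h R hR hRS
    rw [← trace_mul_self_eq_zero_iff_of_isSymm hR]
    exact hspan R hRS R (h ▸ hR)
  · intro h
    exact Submodule.eq_of_le_of_forall_orthogonal_eq_zero (traceForm n ℝ)
      (Submodule.span_le.2 hS) fun R hR hRS => h R hR fun M hM => hRS M (Submodule.subset_span hM)

theorem isSymm_vecMulVec_add_vecMulVec [CommSemiring R] (a b : n → R) :
    (vecMulVec a b + vecMulVec b a).IsSymm := by
  simp [IsSymm, transpose_add, add_comm]

theorem trace_mul_vecMulVec_add_vecMulVec [Fintype n] [CommSemiring R] {M : Matrix n n R}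
    (hM : M.IsSymm) (a b : n → R) :
    trace (M * (vecMulVec a b + vecMulVec b a)) = 2 * (a ⬝ᵥ M *ᵥ b) := by
  have hswap : M *ᵥ a ⬝ᵥ b = a ⬝ᵥ M *ᵥ b := by
    rw [dotProduct_mulVec, ← vecMul_transpose, hM.eq]
  rw [mul_add, trace_add, mul_vecMulVec, mul_vecMulVec, trace_vecMulVec, trace_vecMulVec, hswap,
    dotProduct_comm (M *ᵥ b), two_mul]

end Matrix

namespace SimpleGraph

open Matrix

variable {V n K : Type*} [Fintype V] [Field K] (G : SimpleGraph V) [DecidableRel G.Adj]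
  {τ : K} {p : V → n → K}

theorem sum_neighborFinset_eq_smul
    (hEig : ∀ l : n, G.adjMatrix K *ᵥ (fun i => p i l) = τ • fun i => p i l) (i : V) :
    ∑ j ∈ G.neighborFinset i, p j = τ • p i := by
  ext l
  simpa [adjMatrix_mulVec_apply] using congrFun (hEig l) i

theorem forall_adj_or_eq_iff_forall_adj [Fintype n] (hτ : τ ≠ 0)
    (hEig : ∀ l : n, G.adjMatrix K *ᵥ (fun i => p i l) = τ • fun i => p i l)
    (R : Matrix n n K) :
    (∀ i j, (G.Adj i j ∨ i = j) → p i ⬝ᵥ R *ᵥ p j = 0) ↔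
      ∀ i j, G.Adj i j → p i ⬝ᵥ R *ᵥ p j = 0 := by
  refine ⟨fun h i j hij => h i j (Or.inl hij), fun h => ?_⟩
  rintro i j (hij | rfl)
  · exact h i j hij
  have hscaled : τ * (p i ⬝ᵥ R *ᵥ p i) = 0 := by
    rw [← smul_eq_mul, ← dotProduct_smul, ← mulVec_smul, ← G.sum_neighborFinset_eq_smul hEig,
      mulVec_sum, dotProduct_sum]
    exact sum_eq_zero fun j hj => h i j ((G.mem_neighborFinset i j).1 hj)
  exact (mul_eq_zero.1 hscaled).resolve_left hτ

end SimpleGraph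

theorem stmt19_general {V : Type*} [Fintype V] [DecidableEq V]
    (G : SimpleGraph V) [DecidableRel G.Adj]
    (d : ℕ) (τ : ℝ) (hτ : τ ≠ 0)
    (p : V → Fin d → ℝ)
    (hEig : ∀ l : Fin d, (G.adjMatrix ℝ).mulVec (fun i => p i l) = τ • (fun i => p i l)) :
    ((∀ R : Matrix (Fin d) (Fin d) ℝ, R.IsSymm →
        (∀ i j : V, (G.Adj i j ∨ i = j) →
          dotProduct (p i) (R.mulVec (p j)) = 0) → R = 0)
      ↔ Module.finrank ℝ (Submodule.span ℝ
          {M : Matrix (Fin d) (Fin d) ℝ | ∃ i j : V, G.Adj i j ∧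
            M = Matrix.vecMulVec (p i) (p j) + Matrix.vecMulVec (p j) (p i)})
          = d * (d + 1) / 2) := by
  set S := {M : Matrix (Fin d) (Fin d) ℝ | ∃ i j : V, G.Adj i j ∧
    M = Matrix.vecMulVec (p i) (p j) + Matrix.vecMulVec (p j) (p i)}
  have hS : ∀ M ∈ S, M.IsSymm := by
    rintro _ ⟨i, j, -, rfl⟩
    exact Matrix.isSymm_vecMulVec_add_vecMulVec _ _
  have hdim : Module.finrank ℝ (Matrix.symmetricSubmodule (Fin d) ℝ) = d * (d + 1) / 2 := by
    rw [Matrix.finrank_symmetricSubmodule, Fintype.card_fin, Nat.choose_two_right,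
      Nat.add_sub_cancel, Nat.mul_comm]
  have hrank : Module.finrank ℝ (Submodule.span ℝ S) = d * (d + 1) / 2 ↔
      Submodule.span ℝ S = Matrix.symmetricSubmodule (Fin d) ℝ :=
    ⟨fun h => Submodule.eq_of_le_of_finrank_eq (Submodule.span_le.2 hS) (h.trans hdim.symm),
      fun h => h ▸ hdim⟩
  rw [hrank, Matrix.span_eq_symmetricSubmodule_iff hS]
  refine forall₂_congr fun R hR => imp_congr_left ?_
  rw [G.forall_adj_or_eq_iff_forall_adj hτ hEig]
  simp only [S, Set.mem_ofPred_eq, forall_exists_index, and_imp]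
  refine ⟨fun h M i j hij hM => ?_, fun h i j hij => ?_⟩
  · rw [hM, Matrix.trace_mul_vecMulVec_add_vecMulVec hR, h i j hij, mul_zero]
  · simpa [Matrix.trace_mul_vecMulVec_add_vecMulVec hR] using h _ i j hij rfl

/-- Let `p` be the canonical vector coloring of a 1-walk-regular graph `G`, with `d` the
multiplicity of the least eigenvalue `τ`, and for each edge `{i,j}` let
`p_e = p_i p_jᵀ + p_j p_iᵀ`. Then `G` is uniquely vector colorable (equivalently,
`p_iᵀ R p_j = 0` for all symmetric `R` and all `i ~ j` or `i = j` forces `R = 0`)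
iff the span of `{p_e : e ∈ E(G)}` has dimension `d(d+1)/2`. -/
theorem stmt19 {V : Type*} [Fintype V] [DecidableEq V]
    (G : SimpleGraph V) [DecidableRel G.Adj] (hG : IsOneWalkRegular G)
    (d : ℕ) (τ : ℝ) (hτ : τ ≠ 0)
    (p : V → Fin d → ℝ)
    (hEig : ∀ l : Fin d, (G.adjMatrix ℝ).mulVec (fun i => p i l) = τ • (fun i => p i l))
    (hLeast : ∀ (μ : ℝ) (v : V → ℝ), v ≠ 0 →
      (G.adjMatrix ℝ).mulVec v = μ • v → τ ≤ μ)
    (hCanon : ∀ l l' : Fin d, ∑ i : V, p i l * p i l' =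
      (Fintype.card V : ℝ) / d * (if l = l' then 1 else 0))
    (hMult : ∀ v : V → ℝ, (G.adjMatrix ℝ).mulVec v = τ • v →
      v ∈ Submodule.span ℝ (Set.range fun l : Fin d => (fun i => p i l))) :
    ((∀ R : Matrix (Fin d) (Fin d) ℝ, R.IsSymm →
        (∀ i j : V, (G.Adj i j ∨ i = j) →
          dotProduct (p i) (R.mulVec (p j)) = 0) → R = 0)
      ↔ Module.finrank ℝ (Submodule.span ℝ
          {M : Matrix (Fin d) (Fin d) ℝ | ∃ i j : V, G.Adj i j ∧
            M = Matrix.vecMulVec (p i) (p j) + Matrix.vecMulVec (p j) (p i)})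
          = d * (d + 1) / 2) :=
  stmt19_general G d τ hτ p hEig
end
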